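/- arXiv:1805.04131 — 7 statements merged into one kernel-verified Lean document; each statement's English description precedes it below -/
import Mathlib

section
/- Narrow cuts form a chain: if y ∈ P_HK (the Held-Karp Path TSP polytope with endpoints s,t) and A, B are s-t cuts (s ∈ A,B; t ∉ A,B) with y(δ(A)) < 2 and y(δ(B)) < 2, then A ⊆ B or B ⊆ A. -/
open Finset

variable {V E : Type*}

section Defs
variable [DecidableEq V] [Fintype E] [DecidableEq E]

/-- Edges of the cut `δ(C)`: edges with exactly one endpoint in `C`. -/
def cutE (f g : E → V) (C : Finset V) : Finset E :=
  Finset.univ.filter fun e => ¬((f e ∈ C) ↔ (g e ∈ C))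

/-- `y(δ(C))`, the total `y`-value of the cut `δ(C)`. -/
def cutVal (f g : E → V) (y : E → ℝ) (C : Finset V) : ℝ :=
  ∑ e ∈ cutE f g C, y e

/-- Degree of vertex `v` in the edge set `T`. -/
def degIn (f g : E → V) (T : Finset E) (v : V) : ℕ :=
  (T.filter fun e => f e = v ∨ g e = v).card

/-- `odd(T)`: vertices of odd degree with respect to `T`. -/
def oddVerts [Fintype V] (f g : E → V) (T : Finset E) : Finset V :=
  Finset.univ.filter fun v => Odd (degIn f g T v)

/-- Adjacency via an edge of `T`. -/
def adjIn (f g : E → V) (T : Finset E) (a b : V) : Prop :=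
  ∃ e ∈ T, (f e = a ∧ g e = b) ∨ (f e = b ∧ g e = a)

/-- `T` is a spanning tree: it connects all vertices and has `|V| - 1` edges. -/
def isSpanningTree [Fintype V] (f g : E → V) (T : Finset E) : Prop :=
  (∀ a b : V, Relation.ReflTransGen (adjIn f g T) a b) ∧
  T.card = Fintype.card V - 1

/-- Membership in the Held-Karp Path TSP polytope `P_HK` with endpoints `s`, `t`. -/
def memHK [Fintype V] (f g : E → V) (s t : V) (y : E → ℝ) : Prop :=
  (∀ e, 0 ≤ y e) ∧
  (∀ C : Finset V, C.Nonempty → C ≠ Finset.univ → (s ∈ C ↔ t ∈ C) →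
    2 ≤ cutVal f g y C) ∧
  (∀ C : Finset V, ¬(s ∈ C ↔ t ∈ C) → 1 ≤ cutVal f g y C) ∧
  (∀ v : V, v ≠ s → v ≠ t → cutVal f g y {v} = 2) ∧
  cutVal f g y {s} = 1 ∧ cutVal f g y {t} = 1

/-- `y` is `ℬ`-good: on each cut of the family, the load is at least `3`, or it is
exactly `1` with `y` integral on the cut. -/
def isGood (f g : E → V) (y : E → ℝ) (ℬ : Set (Finset V)) : Prop :=
  ∀ C ∈ ℬ, 3 ≤ cutVal f g y C ∨
    (cutVal f g y C = 1 ∧ ∀ e ∈ cutE f g C, y e = 0 ∨ y e = 1)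

/-- `E[W]`: edges with both endpoints in `W`. -/
def edgesIn (f g : E → V) (W : Finset V) : Finset E :=
  Finset.univ.filter fun e => f e ∈ W ∧ g e ∈ W

/-- Membership in the spanning tree polytope of the graph (Edmonds' description). -/
def memST [Fintype V] (f g : E → V) (x : E → ℝ) : Prop :=
  (∀ e, 0 ≤ x e) ∧
  (∑ e, x e) = (Fintype.card V : ℝ) - 1 ∧
  ∀ W : Finset V, W.Nonempty → ∑ e ∈ edgesIn f g W, x e ≤ (W.card : ℝ) - 1

/-- Membership in the spanning tree polytope of the induced subgraph `G[W]`,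
viewed in `ℝ^E` with coordinates outside `E[W]` equal to zero. -/
def memSTon (f g : E → V) (W : Finset V) (x : E → ℝ) : Prop :=
  (∀ e, 0 ≤ x e) ∧ (∀ e, e ∉ edgesIn f g W → x e = 0) ∧
  (∑ e ∈ edgesIn f g W, x e) = (W.card : ℝ) - 1 ∧
  ∀ S : Finset V, S ⊆ W → S.Nonempty → ∑ e ∈ edgesIn f g S, x e ≤ (S.card : ℝ) - 1

/-- Membership in the Held-Karp relaxation `P_HK(W, u, v)` for `u`-`v` Path TSP on the
induced subgraph `G[W]`, viewed in `ℝ^E` with coordinates outside `E[W]` equal to zero. -/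
def memHKon (f g : E → V) (W : Finset V) (u v : V) (x : E → ℝ) : Prop :=
  (∀ e, 0 ≤ x e) ∧
  (∀ e, e ∉ edgesIn f g W → x e = 0) ∧
  (∀ C : Finset V, C ⊆ W → C.Nonempty → C ≠ W → (u ∈ C ↔ v ∈ C) →
    2 ≤ cutVal f g x C) ∧
  (∀ C : Finset V, C ⊆ W → ¬(u ∈ C ↔ v ∈ C) → 1 ≤ cutVal f g x C) ∧
  (∀ w ∈ W, w ≠ u → w ≠ v → cutVal f g x {w} = 2) ∧
  (u ≠ v → cutVal f g x {u} = 1 ∧ cutVal f g x {v} = 1)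

end Defs


lemma cutVal_indicator [Fintype E] [DecidableEq V] (f g : E → V) (y : E → ℝ) (C : Finset V) :
    cutVal f g y C = ∑ e, (if ¬((f e ∈ C) ↔ (g e ∈ C)) then y e else 0) := by
  rw [cutVal, cutE, Finset.sum_filter]

lemma posimodular [Fintype E] [DecidableEq V] (f g : E → V) (y : E → ℝ)
    (hy : ∀ e, 0 ≤ y e) (A B : Finset V) :
    cutVal f g y (A \ B) + cutVal f g y (B \ A) ≤ cutVal f g y A + cutVal f g y B := by
  simp only [cutVal_indicator, ← Finset.sum_add_distrib]
  apply Finset.sum_le_sum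
  intro e _
  have h := hy e
  by_cases h1 : f e ∈ A <;> by_cases h2 : g e ∈ A <;> by_cases h3 : f e ∈ B <;>
    by_cases h4 : g e ∈ B <;> simp [Finset.mem_sdiff, h1, h2, h3, h4] <;> linarith

/-- Narrow cuts form a chain: if `y ∈ P_HK` and `A`, `B` are `s`-`t` cuts
with `y(δ(A)) < 2` and `y(δ(B)) < 2`, then `A ⊆ B` or `B ⊆ A`. -/
theorem stmt_5 [Fintype V] [DecidableEq V] [Fintype E] [DecidableEq E]
    (f g : E → V) (s t : V) (hst : s ≠ t) (y : E → ℝ) (hy : memHK f g s t y)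
    (A B : Finset V) (hsA : s ∈ A) (htA : t ∉ A) (hsB : s ∈ B) (htB : t ∉ B)
    (hA : cutVal f g y A < 2) (hB : cutVal f g y B < 2) :
    A ⊆ B ∨ B ⊆ A := by
  by_contra hcon
  push_neg at hcon
  obtain ⟨a, haA, haB⟩ := not_subset.1 hcon.1
  obtain ⟨b, hbB, hbA⟩ := not_subset.1 hcon.2
  have h1 : 2 ≤ cutVal f g y (A \ B) := by
    apply hy.2.1
    · exact ⟨a, Finset.mem_sdiff.2 ⟨haA, haB⟩⟩
    · intro h
      have := h ▸ Finset.mem_univ s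
      simp [hsB] at this
    · simp [Finset.mem_sdiff, hsB, htA]
  have h2 : 2 ≤ cutVal f g y (B \ A) := by
    apply hy.2.1
    · exact ⟨b, Finset.mem_sdiff.2 ⟨hbB, hbA⟩⟩
    · intro h
      have := h ▸ Finset.mem_univ s
      simp [hsA] at this
    · simp [Finset.mem_sdiff, hsA, htB]
  have := posimodular f g y hy.1 A B
  linarith
end

section
/- If y ∈ P_HK is B-good for a family B of s-t cuts, x* ∈ P_HK, z = (x* + y)/2, and T ⊆ supp(y) is a spanning tree, then z/2 lies in the dominant of the Q_T-join polytope, where Q_T = odd(T) △ {s,t}, provided every s-t cut C ∉ B satisfies x*(δ(C)) ≥ 3. -/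
open Finset

variable {V E : Type*}

/-! Every cut `C` with `|C ∩ Q_T|` odd must carry `x*(δC) + y(δC) ≥ 4`. As `|Q_T|` is even
(handshake lemma), such a `C` is proper and nonempty, so if it does not separate `s` from `t`
both vectors put at least `2` on it. If it does, the handshake lemma restricted to `C` shows
that `T` crosses `δ(C)` an even number of times, hence at least twice since `T` connects `s`
to `t`. Orient `C` so that `s ∈ C`. If `C ∉ ℬ`, then `x*` puts `3` on it. If `C ∈ ℬ`, the
alternative `y(δC) = 1` with `y` integral is impossible, because `y` is positive, hence `1`,
on the two tree edges in the cut; so `y` puts `3` on it. -/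

section Cuts
variable [DecidableEq V] [Fintype E] (f g : E → V)

lemma cutE_compl [Fintype V] (C : Finset V) : cutE f g Cᶜ = cutE f g C := by
  ext e
  simp only [cutE, mem_filter, mem_univ, true_and, mem_compl]
  tauto

lemma cutE_univ [Fintype V] : cutE f g univ = ∅ := by
  simp [cutE]

lemma cutVal_add_div (x y : E → ℝ) (c : ℝ) (C : Finset V) :
    cutVal f g (fun e => (x e + y e) / c) C = (cutVal f g x C + cutVal f g y C) / c := by
  simp only [cutVal, ← sum_add_distrib, sum_div]

lemma exists_cutE_eq_of_separates [Fintype V] {s t : V} {C : Finset V}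
    (hsep : ¬(s ∈ C ↔ t ∈ C)) : ∃ D, s ∈ D ∧ t ∉ D ∧ cutE f g D = cutE f g C := by
  by_cases hs : s ∈ C
  · exact ⟨C, hs, by tauto, rfl⟩
  · exact ⟨Cᶜ, mem_compl.2 hs, by simpa using (by tauto : t ∈ C), cutE_compl f g C⟩

lemma sum_degIn [DecidableEq E] (hloop : ∀ e, f e ≠ g e) (T : Finset E) (C : Finset V) :
    ∑ v ∈ C, degIn f g T v = 2 * #(T ∩ edgesIn f g C) + #(T ∩ cutE f g C) := by
  have hdeg : ∀ v, degIn f g T v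
      = ∑ e ∈ T, ((if f e = v then 1 else 0) + (if g e = v then 1 else 0)) := by
    intro v
    rw [degIn, card_filter]
    refine sum_congr rfl fun e _ => ?_
    by_cases h1 : f e = v <;> by_cases h2 : g e = v
    · exact absurd (h1.trans h2.symm) (hloop e)
    all_goals simp [h1, h2]
  have hedge : ∀ e, (if f e ∈ C then 1 else 0) + (if g e ∈ C then 1 else 0)
      = 2 * (if e ∈ edgesIn f g C then 1 else 0) + (if e ∈ cutE f g C then 1 else 0) := by
    intro e
    by_cases h1 : f e ∈ C <;> by_cases h2 : g e ∈ C <;> simp [edgesIn, cutE, h1, h2]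
  simp only [hdeg]
  rw [sum_comm]
  simp only [sum_add_distrib, sum_ite_eq, hedge, ← mul_sum, ← card_filter, filter_mem_eq_inter]

lemma even_card_inter_cutE_iff [Fintype V] [DecidableEq E] (hloop : ∀ e, f e ≠ g e)
    (T : Finset E) (C : Finset V) : Even #(T ∩ cutE f g C) ↔ Even #(C ∩ oddVerts f g T) := by
  have hodd := odd_sum_iff_odd_card_odd (s := C) (degIn f g T)
  have hC : C ∩ oddVerts f g T = C.filter fun v => Odd (degIn f g T v) := by
    ext v
    simp [oddVerts]
  rw [sum_degIn f g hloop, Nat.odd_add,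
    iff_false_intro (Nat.not_odd_iff_even.2 (even_two_mul _)), false_iff] at hodd
  rw [hC, ← not_iff_not, hodd, Nat.not_even_iff_odd]

lemma even_card_oddVerts [Fintype V] [DecidableEq E] (hloop : ∀ e, f e ≠ g e) (T : Finset E) :
    Even #(oddVerts f g T) := by
  simpa [cutE_univ] using even_card_inter_cutE_iff f g hloop T univ

lemma exists_mem_inter_cutE_of_reflTransGen [DecidableEq E] (T : Finset E) {C : Finset V}
    {a b : V} (h : Relation.ReflTransGen (adjIn f g T) a b) (ha : a ∈ C) (hb : b ∉ C) :
    (T ∩ cutE f g C).Nonempty := by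
  induction h with
  | refl => exact absurd ha hb
  | @tail c d _ hcd ih =>
    by_cases hc : c ∈ C
    · obtain ⟨e, heT, hfg⟩ := hcd
      refine ⟨e, mem_inter.2 ⟨heT, ?_⟩⟩
      simp only [cutE, mem_filter, mem_univ, true_and]
      rcases hfg with ⟨h1, h2⟩ | ⟨h1, h2⟩ <;> rw [h1, h2] <;> tauto
    · exact ih hc

lemma three_le_cutVal_of_isGood [DecidableEq E] {y : E → ℝ} {ℬ : Set (Finset V)}
    (hgood : isGood f g y ℬ) {C : Finset V} (hC : C ∈ ℬ) (hy0 : ∀ e, 0 ≤ y e) {T : Finset E}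
    (hTsupp : ∀ e ∈ T, 0 < y e) (hT2 : 2 ≤ #(T ∩ cutE f g C)) : 3 ≤ cutVal f g y C := by
  rcases hgood C hC with h3 | ⟨h1, hint⟩
  · exact h3
  have hone : ∀ e ∈ T ∩ cutE f g C, y e = 1 := fun e he =>
    (hint e (mem_inter.1 he).2).resolve_left (hTsupp e (mem_inter.1 he).1).ne'
  have : (2 : ℝ) ≤ 1 := calc
    (2 : ℝ) ≤ #(T ∩ cutE f g C) := by exact_mod_cast hT2
    _ = ∑ e ∈ T ∩ cutE f g C, y e := by rw [sum_congr rfl hone]; simp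
    _ ≤ cutVal f g y C := sum_le_sum_of_subset_of_nonneg inter_subset_right fun e _ _ => hy0 e
    _ = 1 := h1
  norm_num at this

end Cuts

lemma even_card_symmDiff_iff {α : Type*} [DecidableEq α] (A B : Finset α) :
    Even #(symmDiff A B) ↔ (Even #A ↔ Even #B) := by
  have hA := card_sdiff_add_card_inter A B
  have hB := card_sdiff_add_card_inter B A
  have hAB : #(symmDiff A B) = #(A \ B) + #(B \ A) := by
    rw [symmDiff_def, sup_eq_union, card_union_of_disjoint disjoint_sdiff_sdiff]
  have hsum : #(symmDiff A B) + 2 * #(A ∩ B) = #A + #B := by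
    rw [inter_comm B A] at hB
    omega
  rw [← Nat.even_add, ← hsum, Nat.even_add]
  simp

section Tree
variable [Fintype V] [DecidableEq V] [Fintype E] [DecidableEq E] (f g : E → V)

lemma even_card_oddVerts_symmDiff_pair (hloop : ∀ e, f e ≠ g e) (T : Finset E) {s t : V}
    (hst : s ≠ t) : Even #(symmDiff (oddVerts f g T) {s, t}) :=
  (even_card_symmDiff_iff _ _).2
    (iff_of_true (even_card_oddVerts f g hloop T) (by rw [card_pair hst]; exact even_two))

lemma two_le_card_inter_cutE (hloop : ∀ e, f e ≠ g e) {T : Finset E}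
    (hconn : ∀ a b, Relation.ReflTransGen (adjIn f g T) a b) {s t : V} {C : Finset V}
    (hsep : ¬(s ∈ C ↔ t ∈ C)) (hodd : Odd #(C ∩ symmDiff (oddVerts f g T) {s, t})) :
    2 ≤ #(T ∩ cutE f g C) := by
  have hpair : #(C ∩ {s, t}) = 1 := by
    by_cases hs : s ∈ C <;> by_cases ht : t ∈ C <;> simp_all
  have heven : Even #(T ∩ cutE f g C) := by
    rw [← inf_eq_inter, inf_symmDiff_distrib_left, ← Nat.not_even_iff_odd,
      even_card_symmDiff_iff, inf_eq_inter, inf_eq_inter, hpair] at hodd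
    rw [even_card_inter_cutE_iff f g hloop]
    simpa using hodd
  have hne : (T ∩ cutE f g C).Nonempty := by
    by_cases hs : s ∈ C
    · exact exists_mem_inter_cutE_of_reflTransGen f g T (hconn s t) hs (by tauto)
    · exact exists_mem_inter_cutE_of_reflTransGen f g T (hconn t s) (by tauto) hs
  obtain ⟨k, hk⟩ := heven
  have := hne.card_pos
  omega

end Tree

theorem stmt_7_general [Fintype V] [DecidableEq V] [Fintype E] [DecidableEq E]
    (f g : E → V) (hloop : ∀ e, f e ≠ g e) (s t : V) (hst : s ≠ t)
    (ℬ : Set (Finset V))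
    (y xs : E → ℝ) (hy : memHK f g s t y) (hxs : memHK f g s t xs)
    (hgood : isGood f g y ℬ)
    (hout : ∀ C : Finset V, s ∈ C → t ∉ C → C ∉ ℬ → 3 ≤ cutVal f g xs C)
    (T : Finset E) (hTsupp : ∀ e ∈ T, 0 < y e) (hT : isSpanningTree f g T) :
    (∀ e, 0 ≤ (xs e + y e) / 4) ∧
    ∀ C : Finset V, Odd ((C ∩ symmDiff (oddVerts f g T) {s, t}).card) →
      1 ≤ cutVal f g (fun e => (xs e + y e) / 4) C := by
  obtain ⟨hy0, hy2, hy1, -⟩ := hy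
  obtain ⟨hx0, hx2, hx1, -⟩ := hxs
  refine ⟨fun e => by linarith [hx0 e, hy0 e], fun C hC => ?_⟩
  rw [cutVal_add_div]
  suffices 4 ≤ cutVal f g xs C + cutVal f g y C by linarith
  by_cases hsep : s ∈ C ↔ t ∈ C
  · have hne : C.Nonempty := (card_pos.1 hC.pos).mono inter_subset_left
    have hnu : C ≠ univ := by
      rintro rfl
      rw [univ_inter, ← Nat.not_even_iff_odd] at hC
      exact hC (even_card_oddVerts_symmDiff_pair f g hloop T hst)
    linarith [hx2 C hne hnu hsep, hy2 C hne hnu hsep]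
  · have hT2 := two_le_card_inter_cutE f g hloop hT.1 hsep hC
    obtain ⟨D, hsD, htD, hD⟩ := exists_cutE_eq_of_separates f g hsep
    have hDC : ∀ x, cutVal f g x D = cutVal f g x C := fun x => by rw [cutVal, cutVal, hD]
    have hsepD : ¬(s ∈ D ↔ t ∈ D) := fun h => htD (h.1 hsD)
    rw [← hD] at hT2
    rw [← hDC, ← hDC]
    by_cases hB : D ∈ ℬ
    · linarith [hx1 D hsepD, three_le_cutVal_of_isGood f g hgood hB hy0 hTsupp hT2]
    · linarith [hout D hsD htD hB, hy1 D hsepD]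

/-- If `y ∈ P_HK` is `ℬ`-good, `x* ∈ P_HK`, every `s`-`t` cut outside `ℬ`
has `x*`-load at least `3`, and `T ⊆ supp(y)` is a spanning tree, then
`z/2 = (x* + y)/4` lies in the dominant of the `Q_T`-join polytope, where
`Q_T = odd(T) △ {s,t}`. -/
theorem stmt_7 [Fintype V] [DecidableEq V] [Fintype E] [DecidableEq E]
    (f g : E → V) (hloop : ∀ e, f e ≠ g e) (s t : V) (hst : s ≠ t)
    (ℬ : Set (Finset V)) (hℬ : ∀ C ∈ ℬ, s ∈ C ∧ t ∉ C)
    (y xs : E → ℝ) (hy : memHK f g s t y) (hxs : memHK f g s t xs)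
    (hgood : isGood f g y ℬ)
    (hout : ∀ C : Finset V, s ∈ C → t ∉ C → C ∉ ℬ → 3 ≤ cutVal f g xs C)
    (T : Finset E) (hTsupp : ∀ e ∈ T, 0 < y e) (hT : isSpanningTree f g T) :
    (∀ e, 0 ≤ (xs e + y e) / 4) ∧
    ∀ C : Finset V, Odd ((C ∩ symmDiff (oddVerts f g T) {s, t}).card) →
      1 ≤ cutVal f g (fun e => (xs e + y e) / 4) C :=
  stmt_7_general f g hloop s t hst ℬ y xs hy hxs hgood hout T hTsupp hT
end

section
/- For any y in the Held-Karp Path TSP polytope P_HK (with s ≠ t) and any Q ⊆ V with |Q| even such that no Q-cut separates s from t, y/2 lies in the dominant of the Q-join polytope. -/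
open Finset

variable {V E : Type*}

/-- For `y ∈ P_HK` and any even-cardinality `Q ⊆ V` such that no `Q`-cut
separates `s` from `t`, the point `y/2` lies in the dominant of the `Q`-join polytope. -/
theorem stmt_8 [Fintype V] [DecidableEq V] [Fintype E] [DecidableEq E]
    (f g : E → V) (s t : V) (hst : s ≠ t) (y : E → ℝ) (hy : memHK f g s t y)
    (Q : Finset V) (hQ : Even Q.card)
    (hsep : ∀ C : Finset V, Odd ((C ∩ Q).card) → (s ∈ C ↔ t ∈ C)) :
    (∀ e, 0 ≤ y e / 2) ∧
    ∀ C : Finset V, Odd ((C ∩ Q).card) → 1 ≤ cutVal f g (fun e => y e / 2) C := by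
  obtain ⟨hpos, h2, h1, -, -, -⟩ := hy
  refine ⟨fun e => by have := hpos e; linarith, fun C hodd => ?_⟩
  have hne : C.Nonempty := by
    rcases C.eq_empty_or_nonempty with h | h
    · simp [h] at hodd
    · exact h
  have hnu : C ≠ Finset.univ := by
    rintro rfl
    rw [Finset.univ_inter] at hodd
    exact (Nat.not_even_iff_odd.mpr hodd) hQ
  have h := h2 C hne hnu (hsep C hodd)
  have : cutVal f g (fun e => y e / 2) C = cutVal f g y C / 2 := by
    simp [cutVal, Finset.sum_div]
  rw [this]
  linarith
end

section
/- Suppose ∅ = B_0 ⊊ B_1 ⊊ ... ⊊ B_{k+1} = V is a chain of vertex sets, for each i ∈ {0,...,k} the vector x^i ∈ ℝ^E_{≥0} is supported on E[B_{i+1}∖B_i] and its restriction lies in the spanning tree polytope of G[B_{i+1}∖B_i], and e_1,...,e_k are edges with e_i ∈ δ(B_i) such that e_i = {v_i, u_i} with v_i ∈ B_i∖B_{i-1} and u_i ∈ B_{i+1}∖B_i. Then y := Σ_{i=0}^{k} x^i + Σ_{i=1}^{k} χ^{e_i} lies in the spanning tree polytope of G. -/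
open Finset

variable {V E : Type*}

lemma edgesIn_inter' [DecidableEq V] [Fintype E] [DecidableEq E]
    (f g : E → V) (A B : Finset V) :
    edgesIn f g (A ∩ B) = edgesIn f g A ∩ edgesIn f g B := by
  ext e
  simp only [edgesIn, Finset.mem_filter, Finset.mem_inter, Finset.mem_univ, true_and]
  tauto

lemma edgesIn_empty' [DecidableEq V] [Fintype E] [DecidableEq E]
    (f g : E → V) : edgesIn f g (∅ : Finset V) = ∅ := by
  ext e
  simp [edgesIn]

lemma edgesIn_univ' [DecidableEq V] [Fintype V] [Fintype E] [DecidableEq E]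
    (f g : E → V) : edgesIn f g (Finset.univ : Finset V) = Finset.univ := by
  ext e
  simp [edgesIn]

/-- Gluing spanning-tree-polytope points along a chain
`∅ = B_0 ⊊ B_1 ⊊ ... ⊊ B_{k+1} = V` with connecting edges `e_i` (with
`v_i ∈ B_i ∖ B_{i-1}` and `u_i ∈ B_{i+1} ∖ B_i`) yields a point of the spanning
tree polytope of `G`. -/
theorem stmt_12 [Fintype V] [DecidableEq V] [Fintype E] [DecidableEq E]
    (f g : E → V) (k : ℕ) (B : ℕ → Finset V) (x : ℕ → E → ℝ) (ed : ℕ → E)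
    (hB0 : B 0 = ∅) (hBtop : B (k + 1) = Finset.univ)
    (hchain : ∀ i ≤ k, B i ⊂ B (i + 1))
    (hx : ∀ i ≤ k, memSTon f g (B (i + 1) \ B i) (x i))
    (hed : ∀ i, 1 ≤ i → i ≤ k →
      f (ed i) ∈ B i \ B (i - 1) ∧ g (ed i) ∈ B (i + 1) \ B i) :
    memST f g (fun e =>
      (∑ i ∈ Finset.range (k + 1), x i e) +
      ∑ i ∈ Finset.Icc 1 k, (if ed i = e then (1 : ℝ) else 0)) := by
  classical
  set L : ℕ → Finset V := fun i => B (i + 1) \ B i with hLdef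
  have hsub : ∀ i ≤ k, B i ⊆ B (i + 1) := fun i hi => (hchain i hi).subset
  -- monotonicity of the chain
  have hmono : ∀ j ≤ k + 1, ∀ i ≤ j, B i ⊆ B j := by
    intro j
    induction j with
    | zero => intro _ i hi; interval_cases i; exact subset_rfl
    | succ n ih =>
      intro hn i hi
      rcases Nat.lt_or_ge i (n + 1) with h | h
      · exact (ih (by omega) i (by omega)).trans (hsub n (by omega))
      · have : i = n + 1 := by omega
        subst this; exact subset_rfl
  -- every vertex lies in some layer
  have hcover : ∀ v : V, ∃ i, i ≤ k ∧ v ∈ L i := by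
    intro v
    have hex : ∃ i, v ∈ B (i + 1) := ⟨k, by rw [hBtop]; exact Finset.mem_univ v⟩
    refine ⟨Nat.find hex, Nat.find_le (by rw [hBtop]; exact Finset.mem_univ v), ?_⟩
    simp only [hLdef, Finset.mem_sdiff]
    refine ⟨Nat.find_spec hex, fun hvB => ?_⟩
    rcases Nat.eq_zero_or_pos (Nat.find hex) with h | h
    · rw [h, hB0] at hvB; exact absurd hvB (Finset.notMem_empty v)
    · exact Nat.find_min hex (m := Nat.find hex - 1) (by omega)
        (by rwa [Nat.sub_add_cancel h])
  -- layers are pairwise disjoint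
  have hdisj : ∀ i j, i < j → j ≤ k → Disjoint (L i) (L j) := by
    intro i j hij hjk
    refine Finset.disjoint_left.mpr fun v hvi hvj => ?_
    simp only [hLdef, Finset.mem_sdiff] at hvi hvj
    exact hvj.2 (hmono j (by omega) (i + 1) (by omega) hvi.1)
  -- localize sums of `x i` to the layer
  have hsupp : ∀ i ≤ k, ∀ S : Finset V,
      ∑ e ∈ edgesIn f g S, x i e = ∑ e ∈ edgesIn f g (S ∩ L i), x i e := by
    intro i hi S
    rw [edgesIn_inter']
    symm
    refine Finset.sum_subset Finset.inter_subset_left fun e he hne => ?_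
    exact (hx i hi).2.1 e fun h => hne (Finset.mem_inter.mpr ⟨he, h⟩)
  -- the layers partition any set W
  have hpart : ∀ W : Finset V,
      ∑ i ∈ Finset.range (k + 1), (W ∩ L i).card = W.card := by
    intro W
    have hW : W = (Finset.range (k + 1)).biUnion fun i => W ∩ L i := by
      ext v
      simp only [Finset.mem_biUnion, Finset.mem_inter, Finset.mem_range]
      constructor
      · intro hv
        obtain ⟨i, hi, hvi⟩ := hcover v
        exact ⟨i, by omega, hv, hvi⟩
      · rintro ⟨i, _, hv, _⟩; exact hv
    conv_rhs => rw [hW]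
    rw [Finset.card_biUnion]
    intro i hi j hj hij
    simp only [Finset.mem_coe, Finset.mem_range] at hi hj
    rcases lt_or_gt_of_ne hij with h | h
    · exact (hdisj i j h (by omega)).mono Finset.inter_subset_right
        Finset.inter_subset_right
    · exact ((hdisj j i h (by omega)).mono Finset.inter_subset_right
        Finset.inter_subset_right).symm
  refine ⟨?_, ?_, ?_⟩
  · -- nonnegativity
    intro e
    apply add_nonneg
    · exact Finset.sum_nonneg fun i hi =>
        (hx i (by simpa [Nat.lt_succ_iff] using hi)).1 e
    · refine Finset.sum_nonneg fun i _ => ?_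
      split <;> norm_num
  · -- total sum is |V| - 1
    rw [Finset.sum_add_distrib]
    have hA : (∑ e : E, ∑ i ∈ Finset.range (k + 1), x i e)
        = (Fintype.card V : ℝ) - (k + 1) := by
      rw [Finset.sum_comm]
      have hterm : ∀ i ∈ Finset.range (k + 1),
          (∑ e : E, x i e) = ((B (i + 1)).card : ℝ) - (B i).card - 1 := by
        intro i hi
        simp only [Finset.mem_range, Nat.lt_succ_iff] at hi
        have h1 : (∑ e : E, x i e) = ∑ e ∈ edgesIn f g (Finset.univ ∩ L i), x i e := by
          rw [← hsupp i hi, edgesIn_univ']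
        rw [h1, Finset.univ_inter]
        have := (hx i hi).2.2.1
        rw [this]
        have hc : ((L i).card : ℝ) = ((B (i + 1)).card : ℝ) - (B i).card := by
          simp only [hLdef]
          rw [Finset.card_sdiff, Finset.inter_eq_left.mpr (hsub i hi),
            Nat.cast_sub (Finset.card_le_card (hsub i hi))]
        rw [hc]
      rw [Finset.sum_congr rfl hterm]
      have htel : ∑ i ∈ Finset.range (k + 1),
          (((B (i + 1)).card : ℝ) - (B i).card) = (Fintype.card V : ℝ) := by
        rw [Finset.sum_range_sub (fun i => ((B i).card : ℝ))]
        rw [hBtop, hB0]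
        simp
      have : ∑ i ∈ Finset.range (k + 1),
          (((B (i + 1)).card : ℝ) - (B i).card - 1)
          = (∑ i ∈ Finset.range (k + 1),
            (((B (i + 1)).card : ℝ) - (B i).card)) - (k + 1) := by
        rw [Finset.sum_sub_distrib]
        simp
      rw [this, htel]
    have hBsum : (∑ e : E, ∑ i ∈ Finset.Icc 1 k,
        (if ed i = e then (1 : ℝ) else 0)) = (k : ℝ) := by
      rw [Finset.sum_comm]
      have : ∀ i ∈ Finset.Icc 1 k,
          (∑ e : E, if ed i = e then (1 : ℝ) else 0) = 1 := by
        intro i _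
        simp [Finset.sum_ite_eq]
      rw [Finset.sum_congr rfl this]
      simp [Nat.card_Icc]
    rw [hA, hBsum]
    ring
  · -- subtour constraints
    intro W hWne
    rw [Finset.sum_add_distrib]
    set I : Finset ℕ :=
      (Finset.range (k + 1)).filter (fun i => (W ∩ L i).Nonempty) with hIdef
    have hIne : I.Nonempty := by
      obtain ⟨v, hv⟩ := hWne
      obtain ⟨i, hi, hvi⟩ := hcover v
      exact ⟨i, Finset.mem_filter.mpr ⟨Finset.mem_range.mpr (by omega),
        ⟨v, Finset.mem_inter.mpr ⟨hv, hvi⟩⟩⟩⟩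
    set i0 := I.min' hIne with hi0def
    -- the x-part
    have hxpart : (∑ e ∈ edgesIn f g W, ∑ i ∈ Finset.range (k + 1), x i e)
        ≤ (∑ i ∈ I, ((W ∩ L i).card : ℝ)) - I.card := by
      rw [Finset.sum_comm]
      have hre : ∀ i ∈ Finset.range (k + 1),
          (∑ e ∈ edgesIn f g W, x i e) = ∑ e ∈ edgesIn f g (W ∩ L i), x i e :=
        fun i hi => hsupp i (by simpa [Nat.lt_succ_iff] using hi) W
      rw [Finset.sum_congr rfl hre]
      rw [← Finset.sum_subset (Finset.filter_subset
        (fun i => (W ∩ L i).Nonempty) (Finset.range (k + 1)))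
        (fun i hi hni => ?_)]
      · have hle : ∀ i ∈ I, (∑ e ∈ edgesIn f g (W ∩ L i), x i e)
            ≤ ((W ∩ L i).card : ℝ) - 1 := by
          intro i hi
          rw [hIdef, Finset.mem_filter, Finset.mem_range] at hi
          exact (hx i (by omega)).2.2.2 (W ∩ L i) Finset.inter_subset_right hi.2
        calc ∑ i ∈ I, ∑ e ∈ edgesIn f g (W ∩ L i), x i e
            ≤ ∑ i ∈ I, (((W ∩ L i).card : ℝ) - 1) := Finset.sum_le_sum hle
          _ = (∑ i ∈ I, ((W ∩ L i).card : ℝ)) - I.card := by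
              rw [Finset.sum_sub_distrib]; simp
      · have : W ∩ L i = ∅ := by
          rw [Finset.mem_filter] at hni
          push_neg at hni
          exact hni hi
        rw [this, edgesIn_empty', Finset.sum_empty]
    have hcardI : (∑ i ∈ I, ((W ∩ L i).card : ℝ)) = (W.card : ℝ) := by
      have h1 : ∑ i ∈ I, ((W ∩ L i).card : ℝ)
          = ∑ i ∈ Finset.range (k + 1), ((W ∩ L i).card : ℝ) := by
        refine Finset.sum_subset (Finset.filter_subset _ _) fun i hi hni => ?_
        have : W ∩ L i = ∅ := by
          rw [hIdef, Finset.mem_filter] at hni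
          push_neg at hni
          exact hni hi
        rw [this]; simp
      rw [h1, ← Nat.cast_sum]
      rw [hpart W]
    -- the edge part
    set J : Finset ℕ :=
      (Finset.Icc 1 k).filter (fun i => ed i ∈ edgesIn f g W) with hJdef
    have hedgepart : (∑ e ∈ edgesIn f g W, ∑ i ∈ Finset.Icc 1 k,
        (if ed i = e then (1 : ℝ) else 0)) = (J.card : ℝ) := by
      rw [Finset.sum_comm]
      have hterm : ∀ i ∈ Finset.Icc 1 k,
          (∑ e ∈ edgesIn f g W, if ed i = e then (1 : ℝ) else 0)
          = if ed i ∈ edgesIn f g W then (1 : ℝ) else 0 := by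
        intro i _
        rw [Finset.sum_ite_eq]
      rw [Finset.sum_congr rfl hterm, hJdef]
      rw [Finset.sum_boole]
    have hJsub : J ⊆ I.erase i0 := by
      intro i hi
      rw [hJdef, Finset.mem_filter, Finset.mem_Icc] at hi
      obtain ⟨⟨h1i, hik⟩, hedi⟩ := hi
      have hfe : f (ed i) ∈ W ∧ g (ed i) ∈ W := by
        simpa [edgesIn] using hedi
      have hL1 : f (ed i) ∈ L (i - 1) := by
        have := (hed i h1i hik).1
        simp only [hLdef]
        rwa [Nat.sub_add_cancel h1i]
      have hL2 : g (ed i) ∈ L i := (hed i h1i hik).2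
      have hiI : i ∈ I := Finset.mem_filter.mpr ⟨Finset.mem_range.mpr (by omega),
        ⟨g (ed i), Finset.mem_inter.mpr ⟨hfe.2, hL2⟩⟩⟩
      have hi1I : i - 1 ∈ I := Finset.mem_filter.mpr
        ⟨Finset.mem_range.mpr (by omega),
        ⟨f (ed i), Finset.mem_inter.mpr ⟨hfe.1, hL1⟩⟩⟩
      have hmin : i0 ≤ i - 1 := Finset.min'_le I (i - 1) hi1I
      exact Finset.mem_erase.mpr ⟨by omega, hiI⟩
    have hJcard : (J.card : ℝ) ≤ (I.card : ℝ) - 1 := by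
      have h1 : J.card ≤ (I.erase i0).card := Finset.card_le_card hJsub
      have h2 : (I.erase i0).card = I.card - 1 :=
        Finset.card_erase_of_mem (Finset.min'_mem I hIne)
      have h3 : 1 ≤ I.card := Finset.card_pos.mpr hIne
      have : (J.card : ℕ) + 1 ≤ I.card := by omega
      have := Nat.cast_le (α := ℝ) |>.mpr this
      push_cast at this ⊢
      linarith
    rw [hedgepart]
    have hIcard : (1 : ℝ) ≤ (I.card : ℝ) := by
      exact_mod_cast Finset.card_pos.mpr hIne
    linarith [hxpart, hcardI, hJcard]
end

section
/- If x ∈ ℝ^E_{≥0} lies in the spanning tree polytope of G and satisfies x(δ(v)) = 2 for all v ∉ {s,t} and x(δ(s)) = x(δ(t)) = 1, then for every nonempty proper C ⊊ V with |C ∩ {s,t}| ∈ {0,2} one has x(δ(C)) ≥ 2, and for every C with |C ∩ {s,t}| = 1 one has x(δ(C)) ≥ 1. -/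
open Finset

variable {V E : Type*}

lemma sum_deg_eq [Fintype V] [DecidableEq V] [Fintype E] [DecidableEq E]
    (f g : E → V) (hloop : ∀ e, f e ≠ g e) (x : E → ℝ) (C : Finset V) :
    ∑ v ∈ C, cutVal f g x {v}
      = cutVal f g x C + 2 * ∑ e ∈ edgesIn f g C, x e := by
  unfold cutVal cutE edgesIn
  simp only [Finset.mem_singleton, Finset.sum_filter]
  rw [Finset.sum_comm, Finset.mul_sum, ← Finset.sum_add_distrib]
  refine Finset.sum_congr rfl fun e _ => ?_
  have h := hloop e
  have step : ∀ v ∈ C, (if ¬(f e = v ↔ g e = v) then x e else 0)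
      = (if f e = v then x e else 0) + (if g e = v then x e else 0) := by
    intro v _; by_cases h1 : f e = v <;> by_cases h2 : g e = v <;> simp_all
  rw [Finset.sum_congr rfl step, Finset.sum_add_distrib,
    Finset.sum_ite_eq, Finset.sum_ite_eq]
  by_cases h1 : f e ∈ C <;> by_cases h2 : g e ∈ C <;> simp [h1, h2] <;> ring

lemma cutVal_compl [Fintype V] [DecidableEq V] [Fintype E] [DecidableEq E]
    (f g : E → V) (x : E → ℝ) (C : Finset V) :
    cutVal f g x Cᶜ = cutVal f g x C := by
  unfold cutVal cutE
  refine Finset.sum_congr (Finset.filter_congr fun e _ => ?_) fun _ _ => rfl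
  simp only [Finset.mem_compl]
  tauto

/-- A point of the spanning tree polytope with degrees `2` off `{s,t}` and
`1` at `s` and `t` satisfies the Held-Karp cut constraints: load at least `2` on
nonempty proper cuts not separating `s` and `t`, and at least `1` on `s`-`t` cuts. -/
theorem stmt_14 [Fintype V] [DecidableEq V] [Fintype E] [DecidableEq E]
    (f g : E → V) (hloop : ∀ e, f e ≠ g e) (s t : V) (hst : s ≠ t)
    (x : E → ℝ) (hST : memST f g x)
    (hdeg2 : ∀ v : V, v ≠ s → v ≠ t → cutVal f g x {v} = 2)
    (hdegs : cutVal f g x {s} = 1) (hdegt : cutVal f g x {t} = 1) :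
    (∀ C : Finset V, C.Nonempty → C ≠ Finset.univ → (s ∈ C ↔ t ∈ C) →
      2 ≤ cutVal f g x C) ∧
    (∀ C : Finset V, ¬(s ∈ C ↔ t ∈ C) → 1 ≤ cutVal f g x C) := by
  obtain ⟨hx0, -, hsub⟩ := hST
  have hdeg : ∀ v : V, cutVal f g x {v}
      = 2 - (if v = s then (1:ℝ) else 0) - (if v = t then (1:ℝ) else 0) := by
    intro v
    by_cases hs : v = s
    · subst hs; simp [hdegs, hst]; norm_num
    · by_cases ht : v = t
      · subst ht; simp [hdegt, hs]; norm_num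
      · simp [hs, ht, hdeg2 v hs ht]
  have key : ∀ C : Finset V,
      cutVal f g x C = 2 * C.card - (if s ∈ C then (1:ℝ) else 0)
        - (if t ∈ C then (1:ℝ) else 0) - 2 * ∑ e ∈ edgesIn f g C, x e := by
    intro C
    have h1 := sum_deg_eq f g hloop x C
    have h2 : ∑ v ∈ C, cutVal f g x {v}
        = 2 * C.card - (if s ∈ C then (1:ℝ) else 0)
          - (if t ∈ C then (1:ℝ) else 0) := by
      rw [Finset.sum_congr rfl fun v _ => hdeg v]
      rw [Finset.sum_sub_distrib, Finset.sum_sub_distrib,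
        Finset.sum_ite_eq', Finset.sum_ite_eq', Finset.sum_const]
      push_cast; ring
    linarith [h1, h2]
  have lb2 : ∀ C : Finset V, C.Nonempty → s ∉ C → t ∉ C → 2 ≤ cutVal f g x C := by
    intro C hne hs ht
    have := hsub C hne
    have hcard : (1:ℝ) ≤ C.card := by exact_mod_cast hne.card_pos
    rw [key C]
    simp only [if_neg hs, if_neg ht]
    linarith
  constructor
  · intro C hne huniv hiff
    by_cases hs : s ∈ C
    · have htC : t ∈ C := hiff.mp hs
      rw [← cutVal_compl]
      apply lb2
      · rw [Finset.nonempty_iff_ne_empty]; simpa using huniv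
      · simpa using hs
      · simpa using htC
    · exact lb2 C hne hs fun htC => hs (hiff.mpr htC)
  · intro C hiff
    have hne : C.Nonempty := by
      by_cases hs : s ∈ C
      · exact ⟨s, hs⟩
      · exact ⟨t, by tauto⟩
    have := hsub C hne
    have hcard : (1:ℝ) ≤ C.card := by exact_mod_cast hne.card_pos
    rw [key C]
    by_cases hs : s ∈ C
    · have ht : t ∉ C := fun h => hiff ⟨fun _ => h, fun _ => hs⟩
      simp only [if_pos hs, if_neg ht]; linarith
    · have ht : t ∈ C := by tauto
      simp only [if_neg hs, if_pos ht]; linarith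
end

section
/- Let B be a family of s-t cuts, let y ∈ P_HK be B-good with integral 1-cuts B_1 ⊊ ... ⊊ B_k (edges {v_i,u_i}), let B ∈ B ∖ {B_1,...,B_k}, and suppose {B_1,...,B_k} ∪ {B} is not a chain, i.e., there is i with B ⊄ B_i and B_i ⊄ B. Then y(δ(B)) ≥ 3. -/
open Finset

variable {V E : Type*}

/-- Let `y ∈ P_HK` be `ℬ`-good with integral 1-cuts `B_1 ⊊ ... ⊊ B_k`,
let `B ∈ ℬ` be none of the `B_i`, and suppose `{B_1,...,B_k} ∪ {B}` is not a chain,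
i.e., there is `i` with `B ⊄ B_i` and `B_i ⊄ B`. Then `y(δ(B)) ≥ 3`. -/
theorem stmt_16 [Fintype V] [DecidableEq V] [Fintype E] [DecidableEq E]
    (f g : E → V) (s t : V) (hst : s ≠ t)
    (ℬ : Set (Finset V)) (hℬ : ∀ C ∈ ℬ, s ∈ C ∧ t ∉ C)
    (y : E → ℝ) (hy : memHK f g s t y) (hgood : isGood f g y ℬ)
    (k : ℕ) (Bs : Fin k → Finset V) (hmono : StrictMono Bs)
    (hcuts : ∀ i, s ∈ Bs i ∧ t ∉ Bs i)
    (hint1 : ∀ i, cutVal f g y (Bs i) = 1 ∧ ∀ e ∈ cutE f g (Bs i), y e = 0 ∨ y e = 1)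
    (B : Finset V) (hB : B ∈ ℬ) (hBnot : ∀ i, B ≠ Bs i)
    (i : Fin k) (h1 : ¬B ⊆ Bs i) (h2 : ¬Bs i ⊆ B) :
    3 ≤ cutVal f g y B := by
  have hsB : s ∈ B := (hℬ B hB).1
  have htB : t ∉ B := (hℬ B hB).2
  have hsBi : s ∈ Bs i := (hcuts i).1
  have htBi : t ∉ Bs i := (hcuts i).2
  -- posimodularity: cut(B\Bi) + cut(Bi\B) ≤ cut(B) + cut(Bi)
  have hrw : ∀ C : Finset V, cutVal f g y C
      = ∑ e, if ¬((f e ∈ C) ↔ (g e ∈ C)) then y e else 0 := by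
    intro C; rw [cutVal, cutE, Finset.sum_filter]
  have hsub : cutVal f g y (B \ Bs i) + cutVal f g y (Bs i \ B)
      ≤ cutVal f g y B + cutVal f g y (Bs i) := by
    rw [hrw, hrw, hrw, hrw, ← Finset.sum_add_distrib, ← Finset.sum_add_distrib]
    apply Finset.sum_le_sum
    intro e _
    have h0 := hy.1 e
    simp only [Finset.mem_sdiff]
    by_cases hfB : f e ∈ B <;> by_cases hgB : g e ∈ B <;>
      by_cases hfI : f e ∈ Bs i <;> by_cases hgI : g e ∈ Bs i <;>
      simp [hfB, hgB, hfI, hgI] <;> linarith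
  have hne1 : (B \ Bs i).Nonempty := by
    rw [Finset.sdiff_nonempty]; exact h1
  have hne2 : (Bs i \ B).Nonempty := by
    rw [Finset.sdiff_nonempty]; exact h2
  have hs1 : s ∉ B \ Bs i := by simp [hsBi]
  have hs2 : s ∉ Bs i \ B := by simp [hsB]
  have ht1 : t ∉ B \ Bs i := by simp [htB]
  have ht2 : t ∉ Bs i \ B := by simp [htBi]
  have hu1 : B \ Bs i ≠ Finset.univ := by
    intro h; exact hs1 (h ▸ Finset.mem_univ s)
  have hu2 : Bs i \ B ≠ Finset.univ := by
    intro h; exact hs2 (h ▸ Finset.mem_univ s)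
  have hc1 : 2 ≤ cutVal f g y (B \ Bs i) :=
    hy.2.1 _ hne1 hu1 (by simp [hs1, ht1])
  have hc2 : 2 ≤ cutVal f g y (Bs i \ B) :=
    hy.2.1 _ hne2 hu2 (by simp [hs2, ht2])
  have hi1 := (hint1 i).1
  linarith
end

section
/- Combining a tree and a join bound the output length: if T ⊆ E is a spanning tree with ℓ(T) ≤ OPT, J ⊆ E is a Q_T-join with ℓ(J) ≤ OPT/2 where Q_T = odd(T) △ {s,t}, then the multigraph with edge multiset T ⊎ J has all degrees even except at s and t (which have odd degree), hence contains an Eulerian s-t trail, and shortcutting under the triangle inequality yields a Hamiltonian s-t path of length at most (3/2)·OPT. -/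
/-!
A vertex has odd degree in `T ⊎ J` iff it lies in exactly one of `odd(T)` and
`odd(J) = odd(T) △ {s, t}`, that is, iff it is `s` or `t`.
Since `T` spans, `T ⊎ J` is connected, and Hierholzer's argument yields an Eulerian `s`-`t`
walk: a greedy walk from `s` can only get stuck at `t`, and closed walks of the even remainder,
which touch the current walk by connectivity, are spliced into it until no edge is left.
The walk visits every vertex, so keeping a single visit of each vertex strictly between the
ends gives a Hamiltonian `s`-`t` path, which by the triangle inequality is no longer than the
walk, whose length is `ℓ(T) + ℓ(J) ≤ 3/2 · OPT`.
-/

open Finset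

variable {V E : Type*}

lemma Relation.ReflTransGen.exists_rel_of_notMem_of_mem {α : Type*} {r : α → α → Prop}
    {S : Set α} {x y : α} (h : Relation.ReflTransGen r x y) (hx : x ∉ S) (hy : y ∈ S) :
    ∃ x' y', r x' y' ∧ x' ∉ S ∧ y' ∈ S := by
  induction h with
  | refl => exact absurd hy hx
  | @tail b c _ hbc ih =>
    by_cases hb : b ∈ S
    · exact ih hb
    · exact ⟨b, c, hbc, hb, hy⟩

section Shortcut

variable (ℓ : V → V → ℝ)

def pathLength (L : List V) : ℝ :=
  ((L.zip L.tail).map fun p => ℓ p.1 p.2).sum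

variable {ℓ}

@[simp]
lemma pathLength_cons_cons (a b : V) (L : List V) :
    pathLength ℓ (a :: b :: L) = ℓ a b + pathLength ℓ (b :: L) := by
  simp [pathLength]

lemma pathLength_le_of_sublist (htri : ∀ a b c, ℓ a c ≤ ℓ a b + ℓ b c) {X L : List V}
    (h : X.Sublist L) (a b : V) :
    pathLength ℓ (a :: (X ++ [b])) ≤ pathLength ℓ (a :: (L ++ [b])) := by
  induction h generalizing a with
  | slnil => rfl
  | @cons X L c _ ih =>
    obtain ⟨d, L', hL⟩ := List.exists_cons_of_ne_nil (List.append_ne_nil_of_right_ne_nil L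
      (List.cons_ne_nil b []))
    calc pathLength ℓ (a :: (X ++ [b])) ≤ pathLength ℓ (a :: (L ++ [b])) := ih a
      _ ≤ ℓ a c + pathLength ℓ (c :: (L ++ [b])) := by
        rw [hL, pathLength_cons_cons, pathLength_cons_cons]
        linarith [htri a c d]
  | cons_cons c _ ih => simpa using ih c

lemma exists_nodup_shortcut (htri : ∀ a b c, ℓ a c ≤ ℓ a b + ℓ b c) {a b : V} (hab : a ≠ b)
    (L : List V) :
    ∃ P : List V, P.Nodup ∧ (∀ v ∈ a :: (L ++ [b]), v ∈ P) ∧ P.head? = some a ∧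
      P.getLast? = some b ∧ pathLength ℓ P ≤ pathLength ℓ (a :: (L ++ [b])) := by
  classical
  set X := (L.filter fun v => v ≠ a ∧ v ≠ b).dedup
  have hX : X.Sublist L := (List.dedup_sublist _).trans List.filter_sublist
  refine ⟨a :: (X ++ [b]), ?_, ?_, rfl, by rw [← List.cons_append, List.getLast?_concat],
    pathLength_le_of_sublist htri hX a b⟩
  · simp [X, List.nodup_append, List.nodup_dedup, hab]
  · intro v hv
    by_cases hva : v = a
    · simp [hva]
    by_cases hvb : v = b
    · simp [hvb]
    simpa [X, hva, hvb] using hv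

end Shortcut

namespace Multigraph

section Walks

variable (f g : E → V)

def Joins (e : E) (a b : V) : Prop :=
  (f e = a ∧ g e = b) ∨ (f e = b ∧ g e = a)

def deg [DecidableEq V] (M : Multiset E) (v : V) : ℕ :=
  (M.filter fun e => f e = v ∨ g e = v).card

def Connected (M : Multiset E) : Prop :=
  ∀ x y, Relation.ReflTransGen (fun x y => ∃ e ∈ M, Joins f g e x y) x y

/-- A walk from `a` to `b` along the edges `es`; `vs` lists the vertices after the start, so
the walk visits `a :: vs`. -/
inductive IsWalk : V → V → List E → List V → Prop
  | nil (a : V) : IsWalk a a [] []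
  | cons {e : E} {a c b : V} {es : List E} {vs : List V} :
      Joins f g e a c → IsWalk c b es vs → IsWalk a b (e :: es) (c :: vs)

variable {f g}

lemma Joins.exists_of_incident {e : E} {a : V} (h : f e = a ∨ g e = a) :
    ∃ c, Joins f g e a c := by
  rcases h with rfl | rfl
  · exact ⟨g e, .inl ⟨rfl, rfl⟩⟩
  · exact ⟨f e, .inr ⟨rfl, rfl⟩⟩

lemma Joins.incident_iff {e : E} {a c : V} (h : Joins f g e a c) (v : V) :
    (f e = v ∨ g e = v) ↔ (v = a ∨ v = c) := by
  rcases h with ⟨rfl, rfl⟩ | ⟨rfl, rfl⟩ <;> tauto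

lemma Joins.ne (hloop : ∀ e, f e ≠ g e) {e : E} {a c : V} (h : Joins f g e a c) : a ≠ c := by
  rcases h with ⟨rfl, rfl⟩ | ⟨rfl, rfl⟩
  exacts [hloop e, (hloop e).symm]

namespace IsWalk

variable {a b c u : V} {es es' : List E} {vs vs' : List V}

lemma append (w : IsWalk f g a b es vs) (w' : IsWalk f g b c es' vs') :
    IsWalk f g a c (es ++ es') (vs ++ vs') := by
  induction w with
  | nil => exact w'
  | cons h _ ih => exact .cons h (ih w')

lemma mem_of_mem (w : IsWalk f g a b es vs) {e : E} (he : e ∈ es) :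
    f e ∈ a :: vs ∧ g e ∈ a :: vs := by
  induction w with
  | nil => simp at he
  | cons h _ ih =>
    rcases List.mem_cons.1 he with rfl | he
    · rcases h with ⟨h1, h2⟩ | ⟨h1, h2⟩ <;> simp [h1, h2]
    · exact ⟨List.mem_cons_of_mem _ (ih he).1, List.mem_cons_of_mem _ (ih he).2⟩

lemma splice (w : IsWalk f g a b es vs) (hu : u ∈ a :: vs) (wc : IsWalk f g u u es' vs') :
    ∃ es'' vs'', IsWalk f g a b es'' vs'' ∧ (es'' : Multiset E) = es + es' := by
  induction w with
  | nil a =>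
    obtain rfl : u = a := List.mem_singleton.1 hu
    exact ⟨es', vs', wc, by simp⟩
  | @cons e a c b es vs h w ih =>
    by_cases hua : u = a
    · subst hua
      exact ⟨es' ++ e :: es, vs' ++ c :: vs, wc.append (.cons h w), by simp [add_comm]⟩
    · obtain ⟨es'', vs'', w'', hes''⟩ := ih (List.mem_of_ne_of_mem hua hu)
      refine ⟨e :: es'', c :: vs'', .cons h w'', ?_⟩
      rw [← Multiset.cons_coe, hes'', ← Multiset.cons_add, Multiset.cons_coe]

lemma length_eq (w : IsWalk f g a b es vs) : vs.length = es.length := by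
  induction w with
  | nil => rfl
  | cons _ _ ih => simp [ih]

lemma joins_of_mem_zip (w : IsWalk f g a b es vs) :
    ∀ p ∈ es.zip ((a :: vs).zip vs), Joins f g p.1 p.2.1 p.2.2 := by
  induction w with
  | nil => simp
  | cons h _ ih =>
    intro p hp
    rcases List.mem_cons.1 hp with rfl | hp
    · exact h
    · exact ih p hp

lemma eq_nil_or_eq_append (w : IsWalk f g a b es vs) :
    (a = b ∧ vs = []) ∨ ∃ L, vs = L ++ [b] := by
  induction w with
  | nil => exact .inl ⟨rfl, rfl⟩
  | @cons e a c b es vs h w ih =>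
    rcases ih with ⟨rfl, rfl⟩ | ⟨L, rfl⟩
    · exact .inr ⟨[], rfl⟩
    · exact .inr ⟨c :: L, rfl⟩

lemma pathLength_eq {ℓ : V → V → ℝ} (hsymm : ∀ a b, ℓ a b = ℓ b a)
    (w : IsWalk f g a b es vs) :
    pathLength ℓ (a :: vs) = (es.map fun e => ℓ (f e) (g e)).sum := by
  induction w with
  | nil => simp [pathLength]
  | cons h _ ih =>
    rw [pathLength_cons_cons, ih, List.map_cons, List.sum_cons]
    rcases h with ⟨h1, h2⟩ | ⟨h1, h2⟩
    · rw [h1, h2]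
    · rw [h1, h2, hsymm]


lemma exists_boundary_edge {M : Multiset E} (hM : Connected f g M) {v : V}
    (w : IsWalk f g a b es vs) (hv : v ∉ a :: vs) :
    ∃ e ∈ M, e ∉ es ∧ ∃ y ∈ a :: vs, f e = y ∨ g e = y := by
  obtain ⟨x, y, ⟨e, he, hxy⟩, hx, hy⟩ :=
    (hM v a).exists_rel_of_notMem_of_mem (S := {u | u ∈ a :: vs}) hv List.mem_cons_self
  refine ⟨e, he, fun hes => hx ?_, y, hy, (hxy.incident_iff y).2 (.inr rfl)⟩
  rcases (hxy.incident_iff x).2 (.inl rfl) with hfx | hgx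
  · exact hfx ▸ (w.mem_of_mem hes).1
  · exact hgx ▸ (w.mem_of_mem hes).2

lemma mem_support_of_connected {M : Multiset E} (hM : Connected f g M)
    (w : IsWalk f g a b es vs) (hes : (es : Multiset E) = M) (v : V) : v ∈ a :: vs := by
  by_contra hv
  obtain ⟨e, he, hne, -⟩ := w.exists_boundary_edge hM hv
  exact hne (Multiset.mem_coe.1 (hes ▸ he))

end IsWalk

end Walks

section Degrees

variable [DecidableEq V] {f g : E → V}

lemma deg_add (A B : Multiset E) (v : V) : deg f g (A + B) v = deg f g A v + deg f g B v := by
  simp [deg, Multiset.filter_add]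

lemma Joins.deg_cons {e : E} {a c : V} (h : Joins f g e a c) (M : Multiset E) (v : V) :
    deg f g (e ::ₘ M) v = deg f g M v + if v = a ∨ v = c then 1 else 0 := by
  simp only [deg, Multiset.filter_cons, h.incident_iff v]
  split_ifs <;> simp [add_comm]

lemma deg_pos_of_mem {M : Multiset E} {e : E} (he : e ∈ M) {v : V} (hv : f e = v ∨ g e = v) :
    0 < deg f g M v :=
  Multiset.card_pos_iff_exists_mem.2 ⟨e, Multiset.mem_filter.2 ⟨he, hv⟩⟩

lemma exists_incident_of_deg_pos {M : Multiset E} {v : V} (h : 0 < deg f g M v) :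
    ∃ e ∈ M, f e = v ∨ g e = v := by
  obtain ⟨e, he⟩ := Multiset.card_pos_iff_exists_mem.1 h
  exact ⟨e, (Multiset.mem_filter.1 he).1, (Multiset.mem_filter.1 he).2⟩

lemma IsWalk.even_deg_iff (hloop : ∀ e, f e ≠ g e) {a b : V} {es : List E} {vs : List V}
    (w : IsWalk f g a b es vs) (v : V) :
    Even (deg f g es v) ↔ (v = a ↔ v = b) := by
  induction w with
  | nil => simp [deg]
  | @cons e a c b es vs h w ih =>
    have hac := h.ne hloop
    rw [← Multiset.cons_coe, h.deg_cons, Nat.even_add, ih]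
    by_cases hva : v = a
    · subst hva; simp [hac]
    · by_cases hvc : v = c
      · subst hvc; simp [hva]
      · simp [hva, hvc]

lemma IsWalk.exists_mem_support_deg_pos {M R : Multiset E} (hM : Connected f g M) {a b : V}
    {es : List E} {vs : List V} (w : IsWalk f g a b es vs) (hsum : (es : Multiset E) + R = M)
    (hR : R ≠ 0) : ∃ u ∈ a :: vs, 0 < deg f g R u := by
  obtain ⟨e₀, he₀⟩ := Multiset.exists_mem_of_ne_zero hR
  by_cases hf : f e₀ ∈ a :: vs
  · exact ⟨f e₀, hf, deg_pos_of_mem he₀ (.inl rfl)⟩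
  obtain ⟨e, he, hne, y, hy, hinc⟩ := w.exists_boundary_edge hM hf
  have heR : e ∈ R := by
    rw [← hsum, Multiset.mem_add, Multiset.mem_coe] at he
    exact he.resolve_left hne
  exact ⟨y, hy, deg_pos_of_mem heR hinc⟩

end Degrees

section Euler

variable [DecidableEq V] [DecidableEq E] {f g : E → V}

lemma exists_stuck_walk {M : Multiset E} {a : V} (ha : 0 < deg f g M a) :
    ∃ b es vs, IsWalk f g a b es vs ∧ es ≠ [] ∧ (es : Multiset E) ≤ M ∧
      deg f g (M - es) b = 0 := by
  induction M using Multiset.strongInductionOn generalizing a with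
  | ih M ih =>
  obtain ⟨e, he, hinc⟩ := exists_incident_of_deg_pos ha
  obtain ⟨c, hac⟩ := Joins.exists_of_incident hinc
  by_cases hc : deg f g (M.erase e) c = 0
  · exact ⟨c, [e], [c], .cons hac (.nil c), List.cons_ne_nil _ _, by simpa using he,
      by simpa using hc⟩
  · obtain ⟨b, es, vs, w, -, hle, hstuck⟩ :=
      ih _ (Multiset.erase_lt.2 he) (Nat.pos_of_ne_zero hc)
    refine ⟨b, e :: es, c :: vs, .cons hac w, List.cons_ne_nil _ _, ?_, ?_⟩
    · rw [← Multiset.cons_coe, ← Multiset.cons_erase he]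
      exact Multiset.cons_le_cons e hle
    · rwa [← Multiset.cons_coe, Multiset.sub_cons]

/-- The parity condition says that `a` and `b` are the odd vertices of `M` when `a ≠ b`,
and that all degrees are even when `a = b`. -/
lemma exists_walk_of_even_deg_iff (hloop : ∀ e, f e ≠ g e) {M : Multiset E} {a b : V}
    (hpar : ∀ v, Even (deg f g M v) ↔ (v = a ↔ v = b)) (ha : 0 < deg f g M a) :
    ∃ es vs, IsWalk f g a b es vs ∧ es ≠ [] ∧ (es : Multiset E) ≤ M ∧
      ∀ v, Even (deg f g (M - es) v) := by
  obtain ⟨b', es, vs, w, hne, hle, hstuck⟩ := exists_stuck_walk ha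
  have hsplit : ∀ v, deg f g M v = deg f g es v + deg f g (M - es) v := fun v => by
    rw [← deg_add, add_tsub_cancel_of_le hle]
  obtain rfl : b' = b := by
    have h := hpar b'
    rw [hsplit, hstuck, add_zero, w.even_deg_iff hloop] at h
    by_cases hb'a : b' = a <;> simp_all
  refine ⟨es, vs, w, hne, hle, fun v => ?_⟩
  have h := hpar v
  rw [hsplit, Nat.even_add, w.even_deg_iff hloop] at h
  tauto

/-- Hierholzer's splicing: closed walks in the even remainder `R` are inserted into `w`
until `R` is used up. -/
lemma IsWalk.exists_eulerian (hloop : ∀ e, f e ≠ g e) {M : Multiset E} (hM : Connected f g M)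
    {R : Multiset E} (hR : ∀ v, Even (deg f g R v)) {a b : V} {es : List E} {vs : List V}
    (w : IsWalk f g a b es vs) (hsum : (es : Multiset E) + R = M) :
    ∃ es' vs', IsWalk f g a b es' vs' ∧ (es' : Multiset E) = M := by
  induction R using Multiset.strongInductionOn generalizing es vs with
  | ih R ih =>
  by_cases hR0 : R = 0
  · exact ⟨es, vs, w, by simpa [hR0] using hsum⟩
  obtain ⟨u, hu, hdeg⟩ := w.exists_mem_support_deg_pos hM hsum hR0
  obtain ⟨esc, vsc, wc, hne, hle, hR'⟩ :=
    exists_walk_of_even_deg_iff (b := u) hloop (fun v => by simpa using hR v) hdeg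
  obtain ⟨es', vs', w', hes'⟩ := w.splice hu wc
  have hlt : R - esc < R := by
    refine lt_of_le_of_ne tsub_le_self fun h => hne ?_
    have hcancel := add_tsub_cancel_of_le hle
    rw [h, add_eq_right] at hcancel
    exact (Multiset.coe_eq_zero _).1 hcancel
  refine ih _ hlt hR' w' ?_
  rw [hes', add_assoc, add_tsub_cancel_of_le hle, hsum]

theorem exists_eulerian_walk (hloop : ∀ e, f e ≠ g e) {M : Multiset E} (hM : Connected f g M)
    {a b : V} (hpar : ∀ v, Even (deg f g M v) ↔ (v = a ↔ v = b)) :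
    ∃ es vs, IsWalk f g a b es vs ∧ (es : Multiset E) = M := by
  by_cases hab : a = b
  · subst hab
    exact (IsWalk.nil a).exists_eulerian hloop hM (fun v => by simpa using hpar v) (zero_add M)
  have ha : 0 < deg f g M a := Nat.pos_of_ne_zero fun h => hab (by simpa [h] using hpar a)
  obtain ⟨es, vs, w, -, hle, hR⟩ := exists_walk_of_even_deg_iff hloop hpar ha
  exact w.exists_eulerian hloop hM hR (add_tsub_cancel_of_le hle)

end Euler

end Multigraph



lemma odd_degIn_add_iff_mem [Fintype V] [DecidableEq V] [Fintype E] [DecidableEq E]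
    {f g : E → V} {T J : Finset E} {Q : Finset V}
    (hJ : oddVerts f g J = symmDiff (oddVerts f g T) Q) (v : V) :
    Odd (degIn f g T v + degIn f g J v) ↔ v ∈ Q := by
  have hv := congrArg (v ∈ ·) hJ
  simp only [oddVerts, Finset.mem_filter, Finset.mem_univ, true_and, Finset.mem_symmDiff,
    eq_iff_iff] at hv
  rw [Nat.odd_add', ← Nat.not_even_iff_odd, ← Nat.not_even_iff_odd] at *
  tauto

lemma Multigraph.connected_of_isSpanningTree [Fintype V] {f g : E → V} {T : Finset E}
    (hT : isSpanningTree f g T) {M : Multiset E} (hTM : T.val ≤ M) : Connected f g M :=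
  fun x y => Relation.ReflTransGen.mono
    (fun _ _ ⟨e, he, h⟩ => ⟨e, Multiset.mem_of_le hTM he, h⟩) x y (hT.1 x y)

open Multigraph in
theorem stmt_19_general [Fintype V] [DecidableEq V] [Fintype E] [DecidableEq E]
    (f g : E → V) (hloop : ∀ e, f e ≠ g e) (s t : V) (hst : s ≠ t)
    (ℓ : V → V → ℝ) (hsymm : ∀ a b, ℓ a b = ℓ b a)
    (htri : ∀ a b c, ℓ a c ≤ ℓ a b + ℓ b c)
    (OPT : ℝ)
    (T : Finset E) (hT : isSpanningTree f g T)
    (hTlen : ∑ e ∈ T, ℓ (f e) (g e) ≤ OPT)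
    (J : Finset E) (hJ : oddVerts f g J = symmDiff (oddVerts f g T) {s, t})
    (hJlen : ∑ e ∈ J, ℓ (f e) (g e) ≤ OPT / 2) :
    (∀ v : V, v ≠ s → v ≠ t → Even (degIn f g T v + degIn f g J v)) ∧
    Odd (degIn f g T s + degIn f g J s) ∧
    Odd (degIn f g T t + degIn f g J t) ∧
    (∃ (es : List E) (vs : List V),
      (es : Multiset E) = T.val + J.val ∧
      vs.length = es.length + 1 ∧ vs.head? = some s ∧ vs.getLast? = some t ∧
      ∀ p ∈ es.zip (vs.zip vs.tail),
        (f p.1 = p.2.1 ∧ g p.1 = p.2.2) ∨ (f p.1 = p.2.2 ∧ g p.1 = p.2.1)) ∧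
    (∃ P : List V, P.Nodup ∧ (∀ v : V, v ∈ P) ∧
      P.head? = some s ∧ P.getLast? = some t ∧
      ((P.zip P.tail).map fun p => ℓ p.1 p.2).sum ≤ 3 / 2 * OPT) := by
  have hodd := odd_degIn_add_iff_mem hJ
  have hM : Connected f g (T.val + J.val) :=
    connected_of_isSpanningTree hT (Multiset.le_add_right _ _)
  have hpar : ∀ v, Even (deg f g (T.val + J.val) v) ↔ (v = s ↔ v = t) := fun v => by
    rw [← Nat.not_odd_iff_even, deg_add]
    change ¬Odd (degIn f g T v + degIn f g J v) ↔ _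
    rw [hodd v, Finset.mem_insert, Finset.mem_singleton]
    grind
  obtain ⟨es, vs, w, hes⟩ := exists_eulerian_walk hloop hM hpar
  obtain ⟨L, rfl⟩ := w.eq_nil_or_eq_append.resolve_left fun h => hst h.1
  obtain ⟨P, hP, hPall, hPs, hPt, hPlen⟩ := exists_nodup_shortcut htri hst L
  have hlen : pathLength ℓ (s :: (L ++ [t])) =
      ∑ e ∈ T, ℓ (f e) (g e) + ∑ e ∈ J, ℓ (f e) (g e) := by
    rw [w.pathLength_eq hsymm, ← Multiset.sum_coe, ← Multiset.map_coe, hes, Multiset.map_add,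
      Multiset.sum_add]
    rfl
  refine ⟨fun v hvs hvt => ?_, (hodd s).2 (by simp), (hodd t).2 (by simp),
    ⟨es, s :: (L ++ [t]), hes, by simp [← w.length_eq], rfl,
      by rw [← List.cons_append, List.getLast?_concat], w.joins_of_mem_zip⟩,
    ⟨P, hP, fun v => hPall v (w.mem_support_of_connected hM hes v), hPs, hPt, by
      change pathLength ℓ P ≤ _; linarith⟩⟩
  rw [← Nat.not_odd_iff_even, hodd]
  simp [hvs, hvt]

/-- If `T` is a spanning tree with `ℓ(T) ≤ OPT` and `J` is a `Q_T`-join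
with `ℓ(J) ≤ OPT/2`, where `Q_T = odd(T) △ {s,t}`, then in the multigraph `T ⊎ J` all
degrees are even except at `s` and `t` (which are odd), there exists an Eulerian
`s`-`t` trail using each edge of `T ⊎ J` exactly once, and (by shortcutting under the
triangle inequality) there is a Hamiltonian `s`-`t` path of length at most
`(3/2)·OPT`. -/
theorem stmt_19 [Fintype V] [DecidableEq V] [Fintype E] [DecidableEq E]
    (f g : E → V) (hloop : ∀ e, f e ≠ g e) (s t : V) (hst : s ≠ t)
    (ℓ : V → V → ℝ) (hsymm : ∀ a b, ℓ a b = ℓ b a) (hnn : ∀ a b, 0 ≤ ℓ a b)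
    (hself : ∀ a, ℓ a a = 0) (htri : ∀ a b c, ℓ a c ≤ ℓ a b + ℓ b c)
    (OPT : ℝ)
    (T : Finset E) (hT : isSpanningTree f g T)
    (hTlen : ∑ e ∈ T, ℓ (f e) (g e) ≤ OPT)
    (J : Finset E) (hJ : oddVerts f g J = symmDiff (oddVerts f g T) {s, t})
    (hJlen : ∑ e ∈ J, ℓ (f e) (g e) ≤ OPT / 2) :
    (∀ v : V, v ≠ s → v ≠ t → Even (degIn f g T v + degIn f g J v)) ∧
    Odd (degIn f g T s + degIn f g J s) ∧
    Odd (degIn f g T t + degIn f g J t) ∧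
    (∃ (es : List E) (vs : List V),
      (es : Multiset E) = T.val + J.val ∧
      vs.length = es.length + 1 ∧ vs.head? = some s ∧ vs.getLast? = some t ∧
      ∀ p ∈ es.zip (vs.zip vs.tail),
        (f p.1 = p.2.1 ∧ g p.1 = p.2.2) ∨ (f p.1 = p.2.2 ∧ g p.1 = p.2.1)) ∧
    (∃ P : List V, P.Nodup ∧ (∀ v : V, v ∈ P) ∧
      P.head? = some s ∧ P.getLast? = some t ∧
      ((P.zip P.tail).map fun p => ℓ p.1 p.2).sum ≤ 3 / 2 * OPT) :=
  stmt_19_general f g hloop s t hst ℓ hsymm htri OPT T hT hTlen J hJ hJlen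
end
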